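/- arXiv:1505.02004 — 3 statements merged into one kernel-verified Lean document; each statement's English description precedes it below -/
import Mathlib

section
/- For every real p ≥ 1 and every n-dimensional convex polytope P containing the origin in its interior, the p-th power of the L^p norm of the piecewise affine function ℓ_P (equal to 1 at the origin, 0 outside P, and affine on each cone over a facet of P with apex 0) equals |P| / C(n+p, n); that is, ∫_{ℝ^n} ℓ_P(x)^p dx = (Γ(p+1)Γ(n+1)/Γ(n+p+1)) |P|. -/
/-!
The superlevel set `{t < ℓ}` of `ℓ = max 0 (1 - gauge P)` is the dilate `(1 - t) • interior P`,
whose volume is `(1 - t) ^ n * |P|` because the frontier of a convex set is null. The layer-cake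
formula `∫ ℓ ^ p = p ∫₀^∞ t ^ (p - 1) |{t < ℓ}| dt` then turns the integral into
`p * B(p, n + 1) * |P| = Γ(p + 1) Γ(n + 1) / Γ(n + p + 1) * |P|`.
-/

open MeasureTheory Real Set Filter Topology Module ProbabilityTheory Pointwise

theorem lintegral_rpow_mul_one_sub_rpow_Ioo {α β : ℝ} (hα : 0 < α) (hβ : 0 < β) :
    ∫⁻ t in Ioo 0 1, ENNReal.ofReal (t ^ (α - 1) * (1 - t) ^ (β - 1)) =
      ENNReal.ofReal (beta α β) := by
  have hB := beta_pos hα hβ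
  have h := lintegral_betaPDF_eq_one hα hβ
  simp_rw [lintegral_betaPDF, mul_assoc, ENNReal.ofReal_mul (one_div_pos.mpr hB).le,
    lintegral_const_mul' _ _ ENNReal.ofReal_ne_top] at h
  rw [← ENNReal.eq_div_iff (by simpa using hB) ENNReal.ofReal_ne_top] at h
  rw [h, one_div, one_div, ENNReal.ofReal_inv_of_pos hB, inv_inv]

section Gauge

variable {E : Type*} [NormedAddCommGroup E] [NormedSpace ℝ E] {s : Set E}

theorem gauge_lt_iff_mem_smul_interior (hs : Convex ℝ s) (hs₀ : s ∈ 𝓝 0) {r : ℝ} (hr : 0 < r)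
    {x : E} : gauge s x < r ↔ x ∈ r • interior s := by
  rw [mem_smul_set_iff_inv_smul_mem₀ hr.ne', ← gauge_lt_one_iff_mem_interior hs hs₀,
    gauge_smul_of_nonneg (inv_nonneg.mpr hr.le), smul_eq_mul, inv_mul_lt_iff₀ hr, mul_one]

theorem lt_one_sub_gauge_iff_mem_smul_interior (hs : Convex ℝ s) (hs₀ : s ∈ 𝓝 0) {t : ℝ}
    (ht₀ : 0 ≤ t) (ht₁ : t < 1) {x : E} :
    t < max 0 (1 - gauge s x) ↔ x ∈ (1 - t) • interior s := by
  rw [← gauge_lt_iff_mem_smul_interior hs hs₀ (sub_pos.mpr ht₁), lt_max_iff]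
  constructor
  · rintro (h | h) <;> linarith
  · intro h; right; linarith

theorem max_zero_one_sub_gauge_le_one (x : E) : max 0 (1 - gauge s x) ≤ 1 :=
  max_le zero_le_one (sub_le_self _ (gauge_nonneg x))

theorem continuous_max_zero_one_sub_gauge (hs : Convex ℝ s) (hs₀ : s ∈ 𝓝 0) :
    Continuous fun x ↦ max 0 (1 - gauge s x) :=
  continuous_const.max (continuous_const.sub (continuous_gauge hs hs₀))

variable [FiniteDimensional ℝ E] [MeasurableSpace E] [BorelSpace E] (μ : Measure E)
  [μ.IsAddHaarMeasure]

theorem addHaar_setOf_lt_one_sub_gauge (hs : Convex ℝ s) (hs₀ : s ∈ 𝓝 0) {t : ℝ}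
    (ht₀ : 0 ≤ t) (ht₁ : t < 1) :
    μ {x | t < max 0 (1 - gauge s x)} = ENNReal.ofReal ((1 - t) ^ finrank ℝ E) * μ s := by
  have hlevel : {x | t < max 0 (1 - gauge s x)} = (1 - t) • interior s :=
    Set.ext fun x ↦ lt_one_sub_gauge_iff_mem_smul_interior hs hs₀ ht₀ ht₁
  rw [hlevel, Measure.addHaar_smul_of_nonneg μ (sub_nonneg.mpr ht₁.le),
    measure_interior_of_null_frontier (hs.addHaar_frontier μ)]

theorem lintegral_rpow_one_sub_gauge (hs : Convex ℝ s) (hs₀ : s ∈ 𝓝 0) {p : ℝ} (hp : 0 < p) :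
    ∫⁻ x, ENNReal.ofReal (max 0 (1 - gauge s x) ^ p) ∂μ =
      ENNReal.ofReal (p * beta p (finrank ℝ E + 1)) * μ s := by
  have hlevel : ∀ t ∈ Ioo (0 : ℝ) 1,
      μ {x | t < max 0 (1 - gauge s x)} * ENNReal.ofReal (t ^ (p - 1)) =
        μ s * ENNReal.ofReal (t ^ (p - 1) * (1 - t) ^ ((finrank ℝ E + 1 : ℝ) - 1)) := by
    rintro t ⟨ht₀, ht₁⟩
    rw [addHaar_setOf_lt_one_sub_gauge μ hs hs₀ ht₀.le ht₁, add_sub_cancel_right, rpow_natCast,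
      ENNReal.ofReal_mul (by positivity)]
    ring
  have hempty : ∀ t ∈ Ici (1 : ℝ), {x | t < max 0 (1 - gauge s x)} = ∅ := fun t ht ↦
    eq_empty_of_forall_notMem fun x hx ↦
      (max_zero_one_sub_gauge_le_one x).not_gt (lt_of_le_of_lt ht hx)
  have hnonneg : 0 ≤ᵐ[μ] fun x ↦ max 0 (1 - gauge s x) := ae_of_all _ fun _ ↦ le_max_left _ _
  rw [lintegral_rpow_eq_lintegral_meas_lt_mul μ hnonneg
      (continuous_max_zero_one_sub_gauge hs hs₀).aemeasurable hp, ← Ioo_union_Ici_eq_Ioi one_pos,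
    lintegral_union measurableSet_Ici ((Iio_disjoint_Ici le_rfl).mono_left Ioo_subset_Iio_self),
    setLIntegral_eq_zero measurableSet_Ici fun t ht ↦ by
      simp only [hempty t ht, measure_empty, zero_mul, Pi.zero_apply],
    add_zero,
    setLIntegral_congr_fun measurableSet_Ioo hlevel, lintegral_const_mul _ (by fun_prop),
    lintegral_rpow_mul_one_sub_rpow_Ioo hp (by positivity), ENNReal.ofReal_mul hp.le]
  ring

-- No finiteness of `μ s` is needed: if `μ s = ∞`, both sides are the junk value `0`.
theorem integral_rpow_one_sub_gauge (hs : Convex ℝ s) (hs₀ : s ∈ 𝓝 0) {p : ℝ} (hp : 0 < p) :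
    ∫ x, max 0 (1 - gauge s x) ^ p ∂μ = p * beta p (finrank ℝ E + 1) * μ.real s := by
  have hcont : Continuous fun x ↦ max 0 (1 - gauge s x) ^ p :=
    (continuous_max_zero_one_sub_gauge hs hs₀).rpow_const fun _ ↦ Or.inr hp.le
  rw [integral_eq_lintegral_of_nonneg_ae (ae_of_all _ fun x ↦ by positivity)
      hcont.aestronglyMeasurable,
    lintegral_rpow_one_sub_gauge μ hs hs₀ hp, ENNReal.toReal_mul,
    ENNReal.toReal_ofReal (mul_pos hp (beta_pos hp (by positivity))).le, measureReal_def]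

end Gauge

theorem stmt0_general (n : ℕ) (p : ℝ) (hp : 1 ≤ p)
    (P : Set (EuclideanSpace ℝ (Fin n)))
    (hpoly : ∃ V : Finset (EuclideanSpace ℝ (Fin n)),
      P = convexHull ℝ (V : Set (EuclideanSpace ℝ (Fin n))))
    (h0 : 0 ∈ interior P) :
    ∫ x, (max 0 (1 - gauge P x)) ^ p =
      (Real.Gamma (p + 1) * Real.Gamma (n + 1) / Real.Gamma (n + p + 1)) *
        (volume P).toReal := by
  obtain ⟨V, rfl⟩ := hpoly
  have hp₀ : 0 < p := zero_lt_one.trans_le hp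
  rw [integral_rpow_one_sub_gauge volume (convex_convexHull ℝ _) (mem_interior_iff_mem_nhds.mp h0)
      hp₀, finrank_euclideanSpace_fin, beta, Gamma_add_one hp₀.ne', measureReal_def,
    show p + (n + 1) = n + p + 1 by ring]
  ring

/-- For `p ≥ 1` and a convex polytope `P ⊆ ℝⁿ` with `0` in its interior,
the `p`-th power of the `Lᵖ` norm of the piecewise affine function
`ℓ_P(x) = max 0 (1 - gauge P x)` equals `(Γ(p+1)Γ(n+1)/Γ(n+p+1)) |P|`. -/
theorem stmt0 (n : ℕ) (hn : 0 < n) (p : ℝ) (hp : 1 ≤ p)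
    (P : Set (EuclideanSpace ℝ (Fin n)))
    (hpoly : ∃ V : Finset (EuclideanSpace ℝ (Fin n)),
      P = convexHull ℝ (V : Set (EuclideanSpace ℝ (Fin n))))
    (h0 : 0 ∈ interior P) :
    ∫ x, (max 0 (1 - gauge P x)) ^ p =
      (Real.Gamma (p + 1) * Real.Gamma (n + 1) / Real.Gamma (n + p + 1)) *
        (volume P).toReal :=
  stmt0_general n p hp P hpoly h0
end

section
/- Let 1 ≤ p < n, let P be a convex polytope in ℝ^n with 0 in its interior, and for k ≥ 1 set P_k = λ_k P with λ_k = (k^p / φ(1/k))^{1/n}, where φ(x) → ∞ as x → 0⁺. Then the functions f_k = ℓ_{P_k}/k converge to 0 in W^{1,p}(ℝ^n): both ‖f_k‖_p^p = c_{n,p}|P|/φ(1/k) → 0 and ‖∇f_k‖_p^p = (1/n) S_p(P) k^{−p²/n} φ(1/k)^{(p−n)/n} → 0 as k → ∞. -/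
/-!
The superlevel sets of `ℓ_P = max 0 (1 - gauge P)` are the homothetic copies
`{ℓ_P > t} = (1 - t) • interior P`, so the layer-cake formula turns `∫ ℓ_P ^ p` into
`p |P| ∫₀¹ t ^ (p - 1) (1 - t) ^ n dt`, a Beta integral equal to `c_{n,p} |P|`.
The substitution `x ↦ λ x` multiplies `∫ |ℓ_P(·/λ)/k| ^ p` by `λ ^ n / k ^ p` and
`∫ ‖∇(ℓ_P(·/λ)/k)‖ ^ p` by `λ ^ (n - p) / k ^ p`; with `λ_k ^ n = k ^ p / φ(1/k)` these are the
stated expressions, which tend to `0` because `φ(1/k) → ∞` and `p < n`.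
-/

open MeasureTheory Real Filter Pointwise
open Module (finrank)
open scoped Topology

theorem Real.intervalIntegral_rpow_mul_one_sub_rpow {u v : ℝ} (hu : 0 < u) (hv : 0 < v) :
    ∫ t in (0 : ℝ)..1, t ^ (u - 1) * (1 - t) ^ (v - 1) = Gamma u * Gamma v / Gamma (u + v) := by
  have hbeta : Complex.betaIntegral u v =
      ((∫ t in (0 : ℝ)..1, t ^ (u - 1) * (1 - t) ^ (v - 1) : ℝ) : ℂ) := by
    refine (intervalIntegral.integral_congr fun t ht => ?_).trans RCLike.intervalIntegral_ofReal
    rw [Set.uIcc_of_le zero_le_one] at ht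
    change _ = ((t ^ (u - 1) * (1 - t) ^ (v - 1) : ℝ) : ℂ)
    rw [Complex.ofReal_mul, Complex.ofReal_cpow ht.1, Complex.ofReal_cpow (sub_nonneg.2 ht.2)]
    push_cast
    rfl
  have h := Complex.Gamma_mul_Gamma_eq_betaIntegral (s := u) (t := v) (by simpa) (by simpa)
  rw [hbeta, ← Complex.ofReal_add, Complex.Gamma_ofReal, Complex.Gamma_ofReal,
    Complex.Gamma_ofReal] at h
  rw [eq_div_iff (Gamma_pos_of_pos (add_pos hu hv)).ne', mul_comm]
  exact_mod_cast h.symm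

section Gauge

variable {E : Type*} [NormedAddCommGroup E] [NormedSpace ℝ E] {s : Set E}

theorem gauge_smul_left_eq_gauge_inv_smul {a : ℝ} (ha : 0 ≤ a) (x : E) :
    gauge (a • s) x = gauge s (a⁻¹ • x) := by
  rw [gauge_smul_left_of_nonneg ha, gauge_smul_of_nonneg (inv_nonneg.2 ha), Pi.smul_apply,
    smul_eq_mul]

theorem setOf_lt_max_zero_one_sub_gauge (hs : Convex ℝ s) (h0 : s ∈ 𝓝 0) {t : ℝ}
    (ht0 : 0 ≤ t) (ht1 : t < 1) :
    {x | t < max 0 (1 - gauge s x)} = (1 - t) • interior s := by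
  have hpos : 0 < 1 - t := sub_pos.2 ht1
  ext x
  rw [Set.mem_smul_set_iff_inv_smul_mem₀ hpos.ne', ← gauge_lt_one_iff_mem_interior hs h0,
    gauge_smul_of_nonneg (inv_nonneg.2 hpos.le), smul_eq_mul, inv_mul_lt_one₀ hpos,
    Set.mem_ofPred_eq, lt_max_iff]
  constructor
  · rintro (h | h) <;> linarith
  · intro h
    right
    linarith

variable [FiniteDimensional ℝ E] [MeasurableSpace E] [BorelSpace E] (μ : Measure E)
  [μ.IsAddHaarMeasure]

theorem addHaar_setOf_lt_max_zero_one_sub_gauge (hs : Convex ℝ s) (h0 : s ∈ 𝓝 0) {t : ℝ}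
    (ht0 : 0 ≤ t) (ht1 : t < 1) :
    μ {x | t < max 0 (1 - gauge s x)} = ENNReal.ofReal ((1 - t) ^ finrank ℝ E) * μ s := by
  rw [setOf_lt_max_zero_one_sub_gauge hs h0 ht0 ht1,
    Measure.addHaar_smul_of_nonneg μ (sub_nonneg.2 ht1.le),
    measure_congr (interior_ae_eq_of_null_frontier (hs.addHaar_frontier μ))]

theorem lintegral_max_zero_one_sub_gauge_rpow (hs : Convex ℝ s) (h0 : s ∈ 𝓝 0) {p : ℝ}
    (hp : 0 < p) :
    ∫⁻ x, ENNReal.ofReal (max 0 (1 - gauge s x) ^ p) ∂μ =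
      ENNReal.ofReal (p * ∫ t in (0 : ℝ)..1, t ^ (p - 1) * (1 - t) ^ finrank ℝ E) * μ s := by
  set ℓ : E → ℝ := fun x => max 0 (1 - gauge s x)
  set d := finrank ℝ E
  have hℓ_nonneg (x : E) : 0 ≤ ℓ x := le_max_left _ _
  have hℓ_cont : Continuous ℓ :=
    continuous_const.max (continuous_const.sub (continuous_gauge hs h0))
  have hdensity (a : ℝ) (ha : 0 ≤ a) : ∫ t in (0 : ℝ)..a, p * t ^ (p - 1) = a ^ p := by
    rw [intervalIntegral.integral_const_mul, integral_rpow (Or.inl (by linarith)), sub_add_cancel,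
      zero_rpow hp.ne', sub_zero, mul_div_cancel₀ _ hp.ne']
  have hℓ_le_one (x : E) : ℓ x ≤ 1 := max_le zero_le_one (by linarith [gauge_nonneg (s := s) x])
  have hempty (t : ℝ) (ht : 1 ≤ t) : μ {x | t < ℓ x} = 0 := by
    rw [Set.eq_empty_of_forall_notMem (s := {x | t < ℓ x})
      fun x hx => ((hℓ_le_one x).trans ht).not_gt hx, measure_empty]
  have hdensity_int : ∀ t > 0, IntervalIntegrable (fun t => p * t ^ (p - 1)) volume 0 t :=
    fun _ _ => (intervalIntegral.intervalIntegrable_rpow' (by linarith)).const_mul p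
  have hbeta_int : IntegrableOn (fun t : ℝ => p * (t ^ (p - 1) * (1 - t) ^ d)) (Set.Ioc 0 1) :=
    (((intervalIntegral.intervalIntegrable_rpow' (by linarith)).mul_continuousOn
      ((continuous_const.sub continuous_id).pow d).continuousOn).const_mul p).1
  calc ∫⁻ x, ENNReal.ofReal (ℓ x ^ p) ∂μ
      = ∫⁻ t in Set.Ioi 0, μ {x | t < ℓ x} * ENNReal.ofReal (p * t ^ (p - 1)) := by
        rw [← lintegral_comp_eq_lintegral_meas_lt_mul μ (.of_forall hℓ_nonneg)
          hℓ_cont.aemeasurable hdensity_int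
          (ae_restrict_of_forall_mem measurableSet_Ioi fun t (ht : 0 < t) => by positivity)]
        simp_rw [hdensity _ (hℓ_nonneg _)]
    _ = ∫⁻ t in Set.Ioo 0 1, ENNReal.ofReal (p * (t ^ (p - 1) * (1 - t) ^ d)) * μ s := by
        rw [← Set.Ioo_union_Ici_eq_Ioi zero_lt_one, lintegral_union measurableSet_Ici
          ((Set.Iio_disjoint_Ici le_rfl).mono_left Set.Ioo_subset_Iio_self),
          setLIntegral_congr_fun measurableSet_Ici fun t ht => by rw [hempty t ht, zero_mul],
          lintegral_zero, add_zero]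
        refine setLIntegral_congr_fun measurableSet_Ioo fun t ht => ?_
        rw [addHaar_setOf_lt_max_zero_one_sub_gauge μ hs h0 ht.1.le ht.2, mul_right_comm,
          ← ENNReal.ofReal_mul (pow_nonneg (sub_nonneg.2 ht.2.le) d)]
        congr 2
        ring
    _ = ENNReal.ofReal (p * ∫ t in (0 : ℝ)..1, t ^ (p - 1) * (1 - t) ^ d) * μ s := by
        rw [lintegral_mul_const _ (by fun_prop), ← ofReal_integral_eq_lintegral_ofReal
          (hbeta_int.mono_set Set.Ioo_subset_Ioc_self) (ae_restrict_of_forall_mem measurableSet_Ioo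
            fun t ht => by have := ht.1; have := sub_pos.2 ht.2; positivity),
          integral_const_mul, intervalIntegral.integral_of_le zero_le_one,
          integral_Ioc_eq_integral_Ioo]

theorem integral_max_zero_one_sub_gauge_rpow (hs : Convex ℝ s) (h0 : s ∈ 𝓝 0) {p : ℝ}
    (hp : 0 < p) :
    ∫ x, max 0 (1 - gauge s x) ^ p ∂μ =
      Gamma (p + 1) * Gamma (finrank ℝ E + 1) / Gamma (finrank ℝ E + p + 1) * (μ s).toReal := by
  set d := finrank ℝ E
  have hbeta : ∫ t in (0 : ℝ)..1, t ^ (p - 1) * (1 - t) ^ d =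
      Gamma p * Gamma (d + 1) / Gamma (p + (d + 1)) := by
    simpa [← rpow_natCast] using
      Real.intervalIntegral_rpow_mul_one_sub_rpow hp (by positivity : (0 : ℝ) < d + 1)
  have hΓ : Gamma (p + 1) * Gamma (d + 1) / Gamma (d + p + 1) =
      p * (Gamma p * Gamma (d + 1) / Gamma (p + (d + 1))) := by
    rw [Gamma_add_one hp.ne', show (d : ℝ) + p + 1 = p + (d + 1) by ring]
    ring
  have hcont : Continuous fun x => max 0 (1 - gauge s x) ^ p :=
    (continuous_const.max (continuous_const.sub (continuous_gauge hs h0))).rpow_const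
      fun _ => Or.inr hp.le
  rw [integral_eq_lintegral_of_nonneg_ae (.of_forall fun x => by positivity)
      hcont.aestronglyMeasurable,
    lintegral_max_zero_one_sub_gauge_rpow μ hs h0 hp, ENNReal.toReal_mul, hbeta, hΓ,
    ENNReal.toReal_ofReal (by have := Gamma_pos_of_pos hp; positivity)]

end Gauge

section Dilation

variable {E : Type*} [NormedAddCommGroup E] [NormedSpace ℝ E]

theorem norm_fderiv_comp_inv_smul_div (g : E → ℝ) (a c : ℝ) (x : E) :
    ‖fderiv ℝ (fun y => g (a⁻¹ • y) / c) x‖ = ‖fderiv ℝ g (a⁻¹ • x)‖ / (|a| * |c|) := by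
  have : (fun y => g (a⁻¹ • y) / c) = c⁻¹ • fun y => g (a⁻¹ • y) := by
    ext y
    simp [div_eq_inv_mul]
  rw [this, fderiv_const_smul_field, Pi.smul_apply, fderiv_comp_smul, norm_smul, norm_smul,
    norm_inv, norm_inv, Real.norm_eq_abs, Real.norm_eq_abs]
  field_simp

variable [FiniteDimensional ℝ E] [MeasurableSpace E] [BorelSpace E] (μ : Measure E)
  [μ.IsAddHaarMeasure]

theorem integral_rpow_comp_inv_smul_div {g : E → ℝ} (hg : ∀ x, 0 ≤ g x) {a c : ℝ} (ha : 0 ≤ a)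
    (hc : 0 ≤ c) (p : ℝ) :
    ∫ x, (g (a⁻¹ • x) / c) ^ p ∂μ = a ^ finrank ℝ E / c ^ p * ∫ x, g x ^ p ∂μ := by
  simp_rw [div_rpow (hg _) hc, integral_div,
    Measure.integral_comp_inv_smul_of_nonneg μ (fun x => g x ^ p) ha, smul_eq_mul]
  ring

theorem integral_norm_fderiv_comp_inv_smul_div_rpow (g : E → ℝ) {a c : ℝ} (ha : 0 ≤ a)
    (hc : 0 ≤ c) (p : ℝ) :
    ∫ x, ‖fderiv ℝ (fun y => g (a⁻¹ • y) / c) x‖ ^ p ∂μ =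
      a ^ finrank ℝ E / (a * c) ^ p * ∫ x, ‖fderiv ℝ g x‖ ^ p ∂μ := by
  simp_rw [norm_fderiv_comp_inv_smul_div, abs_of_nonneg ha, abs_of_nonneg hc,
    div_rpow (norm_nonneg _) (mul_nonneg ha hc), integral_div,
    Measure.integral_comp_inv_smul_of_nonneg μ (fun x => ‖fderiv ℝ g x‖ ^ p) ha, smul_eq_mul]
  ring

end Dilation

theorem pow_div_mul_rpow_eq_of_pow_eq {l k φ p : ℝ} {n : ℕ} (hn : n ≠ 0) (hl : 0 < l)
    (hk : 0 < k) (hφ : 0 < φ) (hln : l ^ n = k ^ p / φ) :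
    l ^ n / (l * k) ^ p = k ^ (-p ^ 2 / n) * φ ^ ((p - n) / n) := by
  have hlog : n * log l = p * log k - log φ := by
    rw [← log_pow, hln, log_div (rpow_pos_of_pos hk p).ne' hφ.ne', log_rpow hk]
  refine log_injOn_pos (Set.mem_Ioi.2 (by positivity)) (Set.mem_Ioi.2 (by positivity)) ?_
  rw [log_div (by positivity) (by positivity), log_pow, log_rpow (by positivity),
    log_mul hl.ne' hk.ne', log_mul (by positivity) (by positivity), log_rpow hk, log_rpow hφ]
  have hn' : (n : ℝ) ≠ 0 := Nat.cast_ne_zero.2 hn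
  field_simp
  linear_combination (n - p) * hlog

theorem tendsto_const_mul_natCast_rpow_mul_rpow {ψ : ℕ → ℝ} (hψ : Tendsto ψ atTop atTop)
    {a b : ℝ} (ha : a < 0) (hb : b < 0) (C : ℝ) :
    Tendsto (fun k : ℕ => C * (k : ℝ) ^ a * ψ k ^ b) atTop (𝓝 0) := by
  have hk : Tendsto (fun k : ℕ => (k : ℝ) ^ a) atTop (𝓝 0) := by
    simpa only [neg_neg, Function.comp_def] using
      (tendsto_rpow_neg_atTop (neg_pos.2 ha)).comp tendsto_natCast_atTop_atTop
  have hψb : Tendsto (fun k => ψ k ^ b) atTop (𝓝 0) := by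
    simpa only [neg_neg, Function.comp_def] using (tendsto_rpow_neg_atTop (neg_pos.2 hb)).comp hψ
  simpa only [mul_zero, mul_assoc] using (hk.mul hψb).const_mul C

/-- Let `1 ≤ p < n`, `P` a convex polytope with `0` in its interior,
`φ(x) → ∞` as `x → 0⁺`, `λ_k = (k^p/φ(1/k))^{1/n}`, `P_k = λ_k P` and
`f_k = ℓ_{P_k}/k`. Then `‖f_k‖_p^p = c_{n,p}|P|/φ(1/k) → 0` and
`‖∇f_k‖_p^p = (1/n) S_p(P) k^{-p²/n} φ(1/k)^{(p-n)/n} → 0`, where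
`S_p(P) = n ∫ ‖∇ℓ_P‖^p`; so `f_k → 0` in `W^{1,p}(ℝⁿ)`. -/
theorem stmt11 (n : ℕ) (hn : 0 < n) (p : ℝ) (hp : 1 ≤ p) (hpn : p < n)
    (P : Set (EuclideanSpace ℝ (Fin n)))
    (hpoly : ∃ V : Finset (EuclideanSpace ℝ (Fin n)),
      P = convexHull ℝ (V : Set (EuclideanSpace ℝ (Fin n))))
    (h0 : 0 ∈ interior P)
    (φ : ℝ → ℝ) (hφpos : ∀ x, 0 < φ x)
    (hφ : Tendsto φ (nhdsWithin 0 (Set.Ioi 0)) atTop)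
    (lP : Set (EuclideanSpace ℝ (Fin n)) → EuclideanSpace ℝ (Fin n) → ℝ)
    (hlP : ∀ Q x, lP Q x = max 0 (1 - gauge Q x))
    (lam : ℕ → ℝ)
    (hlam : ∀ k : ℕ, lam k = ((k : ℝ) ^ p / φ (1 / k)) ^ (1 / (n : ℝ)))
    (fk : ℕ → EuclideanSpace ℝ (Fin n) → ℝ)
    (hfk : ∀ (k : ℕ) x, fk k x = lP (lam k • P) x / k)
    (Sp : ℝ) (hSp : Sp = n * ∫ x, ‖fderiv ℝ (lP P) x‖ ^ p) :
    (∀ k : ℕ, 1 ≤ k →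
      ∫ x, (fk k x) ^ p =
        (Real.Gamma (p + 1) * Real.Gamma (n + 1) / Real.Gamma (n + p + 1)) *
          (volume P).toReal / φ (1 / k)) ∧
    Tendsto (fun k : ℕ => ∫ x, (fk k x) ^ p) atTop (nhds 0) ∧
    (∀ k : ℕ, 1 ≤ k →
      ∫ x, ‖fderiv ℝ (fk k) x‖ ^ p =
        (1 / n) * Sp * (k : ℝ) ^ (-(p ^ 2) / n) * (φ (1 / k)) ^ ((p - n) / n)) ∧
    Tendsto (fun k : ℕ => ∫ x, ‖fderiv ℝ (fk k) x‖ ^ p) atTop (nhds 0) := by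
  obtain ⟨V, hV⟩ := hpoly
  have hconv : Convex ℝ P := hV ▸ convex_convexHull ℝ _
  have hp0 : 0 < p := by linarith
  have hn0 : (0 : ℝ) < n := by exact_mod_cast hn
  have hdim : finrank ℝ (EuclideanSpace ℝ (Fin n)) = n := finrank_euclideanSpace_fin
  have hbase (k : ℕ) : 0 ≤ (k : ℝ) ^ p / φ (1 / k) :=
    div_nonneg (rpow_nonneg k.cast_nonneg p) (hφpos _).le
  have hlam_pow (k : ℕ) : lam k ^ n = k ^ p / φ (1 / k) := by
    rw [hlam, one_div (n : ℝ), rpow_inv_natCast_pow (hbase k) hn.ne']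
  have hfk_eq (k : ℕ) : fk k = fun x => lP P ((lam k)⁻¹ • x) / k := by
    ext x
    rw [hfk, hlP, hlP, gauge_smul_left_eq_gauge_inv_smul (hlam k ▸ rpow_nonneg (hbase k) _)]
  have hLp (k : ℕ) (hk : 1 ≤ k) : ∫ x, (fk k x) ^ p =
      Gamma (p + 1) * Gamma (n + 1) / Gamma (n + p + 1) * (volume P).toReal / φ (1 / k) := by
    have := rpow_pos_of_pos (Nat.cast_pos.2 hk) p
    have := hφpos (1 / k)
    rw [hfk_eq, integral_rpow_comp_inv_smul_div volume (fun x => by rw [hlP]; positivity)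
      (hlam k ▸ rpow_nonneg (hbase k) _) k.cast_nonneg, funext (hlP P),
      integral_max_zero_one_sub_gauge_rpow volume hconv (mem_interior_iff_mem_nhds.1 h0) hp0,
      hdim, hlam_pow]
    field_simp
  have hgrad (k : ℕ) (hk : 1 ≤ k) : ∫ x, ‖fderiv ℝ (fk k) x‖ ^ p =
      1 / n * Sp * (k : ℝ) ^ (-p ^ 2 / n) * φ (1 / k) ^ ((p - n) / n) := by
    have hk0 : (0 : ℝ) < k := Nat.cast_pos.2 hk
    have hlam_pos : 0 < lam k :=
      hlam k ▸ rpow_pos_of_pos (div_pos (rpow_pos_of_pos hk0 p) (hφpos _)) _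
    rw [hfk_eq, integral_norm_fderiv_comp_inv_smul_div_rpow volume _ hlam_pos.le k.cast_nonneg,
      hdim, pow_div_mul_rpow_eq_of_pow_eq hn.ne' hlam_pos hk0 (hφpos _) (hlam_pow k), hSp]
    field_simp
  have hφk : Tendsto (fun k : ℕ => φ (1 / k)) atTop atTop :=
    hφ.comp (by simpa only [one_div, Function.comp_def] using
      tendsto_inv_atTop_nhdsGT_zero.comp tendsto_natCast_atTop_atTop)
  refine ⟨hLp, ?_, hgrad, ?_⟩
  · refine ((tendsto_const_nhds (x := Gamma (p + 1) * Gamma (n + 1) / Gamma (n + p + 1) *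
      (volume P).toReal)).div_atTop hφk).congr' ?_
    filter_upwards [eventually_ge_atTop 1] with k hk
    rw [hLp k hk]
  · refine (tendsto_const_mul_natCast_rpow_mul_rpow hφk (a := -p ^ 2 / n) (b := (p - n) / n)
      (div_neg_of_neg_of_pos (by nlinarith) hn0) (div_neg_of_neg_of_pos (by linarith) hn0)
      (1 / n * Sp)).congr' ?_
    filter_upwards [eventually_ge_atTop 1] with k hk
    rw [hgrad k hk]
end

section
/- Let c ∈ C^n(ℝ) and define h(s) = Σ_{j=0}^n (1/j!) C(n,j) s^j c^{(j)}(s). Then the n-fold iterated antiderivative h_n of h starting at 0 (i.e., h_1(s)=∫_0^s h, h_{k+1}(s)=∫_0^s h_k) satisfies h_n(s) = s^n c(s)/n! for all s ≥ 0. More generally, h_k(s) = Σ_{j=0}^{n−k} (1/(j+k)!) C(n−k, j) s^{j+k} c^{(j)}(s) for 1 ≤ k ≤ n. -/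
/-!
Write `G m K` for `binomTaylorSum c m K`. Differentiating `G m (K+1)` termwise
and regrouping with Pascal's rule `C(m+1,j) = C(m,j) + C(m,j-1)` gives `G (m+1) K`, and
`G m (K+1)` vanishes at `0`; so `∫₀ˢ G (m+1) K = G m (K+1) s`. Since `h = G n 0`, induction on `k`
gives `h_k = G (n-k) k`, and `G 0 n s = s^n c(s)/n!`.
-/

open Finset Nat

noncomputable def binomTaylorSum (c : ℝ → ℝ) (m K : ℕ) (s : ℝ) : ℝ :=
  ∑ j ∈ range (m + 1),
    (1 / ((j + K)! : ℝ)) * (m.choose j : ℝ) * s ^ (j + K) * iteratedDeriv j c s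

lemma binomTaylorSum_eq_sum_choose_mul (c : ℝ → ℝ) (m K : ℕ) (s : ℝ) :
    binomTaylorSum c m K s =
      ∑ j ∈ range (m + 1), (m.choose j : ℝ) * (s ^ (j + K) / (j + K)! * iteratedDeriv j c s) :=
  sum_congr rfl fun _ _ => by ring

lemma binomTaylorSum_zero_left (c : ℝ → ℝ) (K : ℕ) (s : ℝ) :
    binomTaylorSum c 0 K s = s ^ K * c s / K ! := by
  simp [binomTaylorSum]
  ring

lemma binomTaylorSum_add_one_apply_zero (c : ℝ → ℝ) (m K : ℕ) :
    binomTaylorSum c m (K + 1) 0 = 0 :=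
  sum_eq_zero fun j _ => by simp

lemma continuous_binomTaylorSum {c : ℝ → ℝ} {m : ℕ} (hc : ContDiff ℝ m c) (K : ℕ) :
    Continuous (binomTaylorSum c m K) :=
  continuous_finsetSum _ fun j hj =>
    (continuous_const.mul (continuous_pow _)).mul
      (hc.continuous_iteratedDeriv j (by exact_mod_cast Nat.lt_succ_iff.mp (mem_range.mp hj)))

lemma hasDerivAt_pow_div_factorial_mul {g : ℝ → ℝ} {g' s : ℝ} (hg : HasDerivAt g g' s) (p : ℕ) :
    HasDerivAt (fun t => t ^ (p + 1) / (p + 1)! * g t)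
      (s ^ p / p ! * g s + s ^ (p + 1) / (p + 1)! * g') s := by
  have hpow : HasDerivAt (fun t : ℝ => t ^ (p + 1) / (p + 1)!) (s ^ p / p !) s := by
    refine ((hasDerivAt_pow (p + 1) s).div_const ((p + 1)! : ℝ)).congr_deriv ?_
    rw [Nat.add_sub_cancel, Nat.factorial_succ]
    push_cast
    field_simp
  exact hpow.mul hg

lemma hasDerivAt_binomTaylorSum {c : ℝ → ℝ} {m : ℕ} (hc : ContDiff ℝ (m + 1) c) (K : ℕ) (s : ℝ) :
    HasDerivAt (binomTaylorSum c m (K + 1)) (binomTaylorSum c (m + 1) K s) s := by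
  have hterm : ∀ j ∈ range (m + 1), HasDerivAt
      (fun t => (m.choose j : ℝ) * (t ^ (j + K + 1) / (j + K + 1)! * iteratedDeriv j c t))
      ((m.choose j : ℝ) * (s ^ (j + K) / (j + K)! * iteratedDeriv j c s
        + s ^ (j + 1 + K) / (j + 1 + K)! * iteratedDeriv (j + 1) c s)) s := by
    intro j hjm
    have hj : (j : WithTop ℕ∞) < ↑(m + 1) := by exact_mod_cast mem_range.mp hjm
    have hg : HasDerivAt (iteratedDeriv j c) (iteratedDeriv (j + 1) c s) s := by
      rw [iteratedDeriv_succ]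
      exact (hc.differentiable_iteratedDeriv j hj s).hasDerivAt
    rw [Nat.add_right_comm j 1 K]
    exact (hasDerivAt_pow_div_factorial_mul hg (j + K)).const_mul _
  have hsum := HasDerivAt.fun_sum hterm
  rw [show binomTaylorSum c m (K + 1) = _ from
    funext fun t => binomTaylorSum_eq_sum_choose_mul c m (K + 1) t]
  refine hsum.congr_deriv ?_
  rw [binomTaylorSum_eq_sum_choose_mul,
    sum_choose_succ_mul (fun i _ => s ^ (i + K) / (i + K)! * iteratedDeriv i c s) m,
    ← sum_add_distrib]
  simp only [mul_add]

lemma integral_binomTaylorSum {c : ℝ → ℝ} {m : ℕ} (hc : ContDiff ℝ (m + 1) c) (K : ℕ) (s : ℝ) :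
    ∫ x in (0 : ℝ)..s, binomTaylorSum c (m + 1) K x = binomTaylorSum c m (K + 1) s := by
  rw [intervalIntegral.integral_eq_sub_of_hasDerivAt
      (fun t _ => hasDerivAt_binomTaylorSum hc K t)
      ((continuous_binomTaylorSum (by exact_mod_cast hc) K).intervalIntegrable _ _),
    binomTaylorSum_add_one_apply_zero, sub_zero]

lemma iteratedIntegral_eq_binomTaylorSum {n : ℕ} {c : ℝ → ℝ} (hc : ContDiff ℝ n c)
    {H : ℕ → ℝ → ℝ} (hH0 : H 0 = binomTaylorSum c n 0)
    (hHsucc : ∀ k s, H (k + 1) s = ∫ x in (0 : ℝ)..s, H k x) :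
    ∀ k ≤ n, H k = binomTaylorSum c (n - k) k := by
  intro k hk
  induction k with
  | zero => exact hH0
  | succ k ih =>
    have hnk : n - k = n - (k + 1) + 1 := by omega
    funext s
    rw [hHsucc, ih (by omega), hnk]
    exact integral_binomTaylorSum (hc.of_le (by exact_mod_cast hnk ▸ n.sub_le k)) k s

theorem stmt13_general (n : ℕ) (c : ℝ → ℝ) (hc : ContDiff ℝ n c)
    (h : ℝ → ℝ)
    (hh : ∀ s : ℝ, h s = ∑ j ∈ Finset.range (n + 1),
      (1 / (j.factorial : ℝ)) * (n.choose j : ℝ) * s ^ j * iteratedDeriv j c s)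
    (H : ℕ → ℝ → ℝ) (hH0 : H 0 = h)
    (hHsucc : ∀ (k : ℕ) (s : ℝ), H (k + 1) s = ∫ x in (0 : ℝ)..s, H k x) :
    (∀ s : ℝ, 0 ≤ s → ∀ k : ℕ, 1 ≤ k → k ≤ n →
      H k s = ∑ j ∈ Finset.range (n - k + 1),
        (1 / ((j + k).factorial : ℝ)) * ((n - k).choose j : ℝ) * s ^ (j + k) *
          iteratedDeriv j c s) ∧
    (∀ s : ℝ, 0 ≤ s → H n s = s ^ n * c s / (n.factorial : ℝ)) := by
  have hH : ∀ k ≤ n, H k = binomTaylorSum c (n - k) k :=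
    iteratedIntegral_eq_binomTaylorSum hc (hH0.trans (funext hh)) hHsucc
  refine ⟨fun s _ k _ hk => congrFun (hH k hk) s, fun s _ => ?_⟩
  rw [hH n le_rfl, Nat.sub_self, binomTaylorSum_zero_left]

/-- For `c ∈ Cⁿ(ℝ)` and `h(s) = ∑_{j=0}^n (1/j!) C(n,j) s^j c^{(j)}(s)`,
the iterated antiderivatives `H k` of `h` from `0` satisfy
`H k s = ∑_{j=0}^{n-k} (1/(j+k)!) C(n-k,j) s^{j+k} c^{(j)}(s)` for `1 ≤ k ≤ n`,
and in particular `H n s = s^n c(s)/n!` for all `s ≥ 0`. -/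
theorem stmt13 (n : ℕ) (hn : 0 < n) (c : ℝ → ℝ) (hc : ContDiff ℝ n c)
    (h : ℝ → ℝ)
    (hh : ∀ s : ℝ, h s = ∑ j ∈ Finset.range (n + 1),
      (1 / (j.factorial : ℝ)) * (n.choose j : ℝ) * s ^ j * iteratedDeriv j c s)
    (H : ℕ → ℝ → ℝ) (hH0 : H 0 = h)
    (hHsucc : ∀ (k : ℕ) (s : ℝ), H (k + 1) s = ∫ x in (0 : ℝ)..s, H k x) :
    (∀ s : ℝ, 0 ≤ s → ∀ k : ℕ, 1 ≤ k → k ≤ n →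
      H k s = ∑ j ∈ Finset.range (n - k + 1),
        (1 / ((j + k).factorial : ℝ)) * ((n - k).choose j : ℝ) * s ^ (j + k) *
          iteratedDeriv j c s) ∧
    (∀ s : ℝ, 0 ≤ s → H n s = s ^ n * c s / (n.factorial : ℝ)) :=
  stmt13_general n c hc h hh H hH0 hHsucc
end
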